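/- Let $n = 3$ with $\gamma^0 = \begin{pmatrix} I & 0 \\ 0 & -I \end{pmatrix}$, $\gamma^j = \begin{pmatrix} 0 & \sigma^j \\ -\sigma^j & 0 \end{pmatrix}$ for $j=1,2,3$, and $\gamma^5 = \begin{pmatrix} 0 & I \\ I & 0 \end{pmatrix}$. Then for every $\psi \in \mathbb{C}^4$ one has $\sum_{\mu=0}^{3} (\overline{\psi}\gamma^\mu\psi)\,\gamma_\mu\psi = (\overline{\psi}\psi)\,\psi - (\overline{\psi}\gamma^5\psi)\,\gamma^5\psi$. -/

import Mathlib

noncomputable section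

open Matrix

/-- `γ⁰ = [[I,0],[0,-I]]`. -/
def gamma0 : Matrix (Fin 4) (Fin 4) ℂ :=
  !![1, 0, 0, 0; 0, 1, 0, 0; 0, 0, -1, 0; 0, 0, 0, -1]

/-- `γ¹ = [[0,σ¹],[-σ¹,0]]`. -/
def gamma1 : Matrix (Fin 4) (Fin 4) ℂ :=
  !![0, 0, 0, 1; 0, 0, 1, 0; 0, -1, 0, 0; -1, 0, 0, 0]

/-- `γ² = [[0,σ²],[-σ²,0]]`. -/
def gamma2 : Matrix (Fin 4) (Fin 4) ℂ :=
  !![0, 0, 0, -Complex.I; 0, 0, Complex.I, 0;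
     0, Complex.I, 0, 0; -Complex.I, 0, 0, 0]

/-- `γ³ = [[0,σ³],[-σ³,0]]`. -/
def gamma3 : Matrix (Fin 4) (Fin 4) ℂ :=
  !![0, 0, 1, 0; 0, 0, 0, -1; -1, 0, 0, 0; 0, 1, 0, 0]

/-- `γ⁵ = [[0,I],[I,0]]`. -/
def gamma5 : Matrix (Fin 4) (Fin 4) ℂ :=
  !![0, 0, 1, 0; 0, 0, 0, 1; 1, 0, 0, 0; 0, 1, 0, 0]

/-- The gamma matrices with upper indices in dimension `n = 3`. -/
def gammaUp4 : Fin 4 → Matrix (Fin 4) (Fin 4) ℂ := ![gamma0, gamma1, gamma2, gamma3]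

/-- Gamma matrices with lowered indices, `γ₀ = γ⁰`, `γⱼ = -γʲ`
(Minkowski metric `diag(1,-1,-1,-1)`). -/
def gammaDown4 (μ : Fin 4) : Matrix (Fin 4) (Fin 4) ℂ :=
  if μ = 0 then gammaUp4 μ else -gammaUp4 μ

/-- Hermitian inner product `u† v` on `ℂ⁴`. -/
def cdot4 (u v : Fin 4 → ℂ) : ℂ := ∑ i, star (u i) * v i

/-- The Dirac bilinear `ψ̄ A ψ = ψ† γ⁰ A ψ`. -/
def diracBilin4 (ψ : Fin 4 → ℂ) (A : Matrix (Fin 4) (Fin 4) ℂ) : ℂ :=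
  cdot4 ψ ((gamma0 * A).mulVec ψ)

/-! Expanding the bilinear covariants `ψ̄ψ`, `ψ̄γ⁵ψ` and `ψ̄γ^μψ` in the components of `ψ`, both
sides become cubic polynomials in `ψ` and `ψ̄`, and the identity is a componentwise polynomial
identity; the `γ²` contributions match because `I² = -1`. -/

lemma diracBilin4_apply (ψ : Fin 4 → ℂ) (A : Matrix (Fin 4) (Fin 4) ℂ) :
    diracBilin4 ψ A = ∑ i, ∑ j, star (ψ i) * (gamma0 * A) i j * ψ j := by
  simp only [diracBilin4, cdot4, mulVec, dotProduct, Finset.mul_sum, mul_assoc]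

lemma diracBilin4_one (ψ : Fin 4 → ℂ) :
    diracBilin4 ψ 1 =
      star (ψ 0) * ψ 0 + star (ψ 1) * ψ 1 - star (ψ 2) * ψ 2 - star (ψ 3) * ψ 3 := by
  simp [diracBilin4_apply, gamma0, Fin.sum_univ_four]
  ring

lemma diracBilin4_gamma5 (ψ : Fin 4 → ℂ) :
    diracBilin4 ψ gamma5 =
      star (ψ 0) * ψ 2 + star (ψ 1) * ψ 3 - star (ψ 2) * ψ 0 - star (ψ 3) * ψ 1 := by
  simp [diracBilin4_apply, gamma0, gamma5, Fin.sum_univ_four, mul_apply]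
  ring

lemma diracBilin4_gamma0 (ψ : Fin 4 → ℂ) :
    diracBilin4 ψ gamma0 =
      star (ψ 0) * ψ 0 + star (ψ 1) * ψ 1 + star (ψ 2) * ψ 2 + star (ψ 3) * ψ 3 := by
  simp [diracBilin4_apply, gamma0, Fin.sum_univ_four, mul_apply]

lemma diracBilin4_gamma1 (ψ : Fin 4 → ℂ) :
    diracBilin4 ψ gamma1 =
      star (ψ 0) * ψ 3 + star (ψ 1) * ψ 2 + star (ψ 2) * ψ 1 + star (ψ 3) * ψ 0 := by
  simp [diracBilin4_apply, gamma0, gamma1, Fin.sum_univ_four, mul_apply]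

lemma diracBilin4_gamma2 (ψ : Fin 4 → ℂ) :
    diracBilin4 ψ gamma2 = Complex.I *
      (star (ψ 1) * ψ 2 + star (ψ 3) * ψ 0 - star (ψ 0) * ψ 3 - star (ψ 2) * ψ 1) := by
  simp [diracBilin4_apply, gamma0, gamma2, Fin.sum_univ_four, mul_apply]
  ring

lemma diracBilin4_gamma3 (ψ : Fin 4 → ℂ) :
    diracBilin4 ψ gamma3 =
      star (ψ 0) * ψ 2 - star (ψ 1) * ψ 3 + star (ψ 2) * ψ 0 - star (ψ 3) * ψ 1 := by
  simp [diracBilin4_apply, gamma0, gamma3, Fin.sum_univ_four, mul_apply]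
  ring

lemma sum_smul_gammaDown4_mulVec (c v : Fin 4 → ℂ) :
    ∑ μ : Fin 4, c μ • gammaDown4 μ *ᵥ v
      = c 0 • gamma0 *ᵥ v - c 1 • gamma1 *ᵥ v - c 2 • gamma2 *ᵥ v - c 3 • gamma3 *ᵥ v := by
  simp only [Fin.sum_univ_four, gammaDown4, gammaUp4]
  simp [neg_mulVec, sub_eq_add_neg]

/-- Fierz-type identity in dimension `n = 3`:
`∑_μ (ψ̄ γ^μ ψ) γ_μ ψ = (ψ̄ ψ) ψ - (ψ̄ γ⁵ ψ) γ⁵ ψ`. -/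
theorem fierz_identity_dim3 (ψ : Fin 4 → ℂ) :
    ∑ μ : Fin 4, diracBilin4 ψ (gammaUp4 μ) • (gammaDown4 μ).mulVec ψ
      = diracBilin4 ψ 1 • ψ - diracBilin4 ψ gamma5 • gamma5.mulVec ψ := by
  rw [sum_smul_gammaDown4_mulVec]
  simp only [gammaUp4, Matrix.cons_val, diracBilin4_gamma0, diracBilin4_gamma1,
    diracBilin4_gamma2, diracBilin4_gamma3, diracBilin4_one, diracBilin4_gamma5]
  ext i
  fin_cases i <;>
  · simp [gamma0, gamma1, gamma2, gamma3, gamma5, dotProduct, Fin.sum_univ_four]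
    ring_nf
    rw [Complex.I_sq]
    ring
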